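/- Let D², DCj, t₀, SA, DA be real numbers satisfying: D² > 0, DCj > 0, t₀ ≥ DCj, SA ≥ 0, and let A·S-type quantities be given by SA = (C_j·D) - t₀·(C_j²) with C_j² ≤ -1, DA = D² - t₀·DCj ≥ 0. Then (D²)·SA - 2·DA·DCj ≥ D²·(t₀ - DCj) ≥ 0, i.e., (D²)·((C_j·D) - t₀·C_j²) - 2·(D² - t₀·DCj)·DCj ≥ 0. -/

import Mathlib

theorem mul_sub_le_mul_sub_two_mul_mul {R : Type*} [CommRing R] [LinearOrder R]
    [IsStrictOrderedRing R] {D2 DS t0 S2 : R} (hD2 : 0 ≤ D2) (ht0 : 0 ≤ t0) (hS2 : S2 ≤ -1) :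
    D2 * (t0 - DS) ≤ D2 * (DS - t0 * S2) - 2 * (D2 - t0 * DS) * DS := by
  have defect : D2 * (DS - t0 * S2) - 2 * (D2 - t0 * DS) * DS - D2 * (t0 - DS)
      = t0 * (D2 * (-1 - S2) + 2 * DS ^ 2) := by ring
  have defect_nonneg : 0 ≤ t0 * (D2 * (-1 - S2) + 2 * DS ^ 2) :=
    mul_nonneg ht0 <| add_nonneg (mul_nonneg hD2 (by linarith)) (by positivity)
  linarith

theorem intersection_computation_general (D2 DCj t0 SA DA Cj2 : ℝ)
    (hD2 : D2 > 0) (hDCj : DCj > 0) (ht0 : t0 ≥ DCj)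
    (hSAeq : SA = DCj - t0 * Cj2) (hCj2 : Cj2 ≤ -1)
    (hDAeq : DA = D2 - t0 * DCj) :
    D2 * SA - 2 * DA * DCj ≥ D2 * (t0 - DCj) ∧ D2 * (t0 - DCj) ≥ 0 := by
  subst hSAeq hDAeq
  exact ⟨mul_sub_le_mul_sub_two_mul_mul hD2.le (hDCj.le.trans ht0) hCj2,
    mul_nonneg hD2.le (sub_nonneg.2 ht0)⟩

/-- Key intersection-number computation in Theorem 3.4: with `S·A = D·C_j - t₀·C_j²`,
`D·A = D² - t₀·(D·C_j)`, `C_j² ≤ -1`, `D² > 0`, `D·C_j > 0`, `t₀ ≥ D·C_j`, one has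
`(D²)(S·A) - 2(D·A)(D·C_j) ≥ D²(t₀ - D·C_j) ≥ 0`. -/
theorem intersection_computation (D2 DCj t0 SA DA Cj2 : ℝ)
    (hD2 : D2 > 0) (hDCj : DCj > 0) (ht0 : t0 ≥ DCj) (hSA : SA ≥ 0)
    (hSAeq : SA = DCj - t0 * Cj2) (hCj2 : Cj2 ≤ -1)
    (hDAeq : DA = D2 - t0 * DCj) (hDA : DA ≥ 0) :
    D2 * SA - 2 * DA * DCj ≥ D2 * (t0 - DCj) ∧ D2 * (t0 - DCj) ≥ 0 :=
  intersection_computation_general D2 DCj t0 SA DA Cj2 hD2 hDCj ht0 hSAeq hCj2 hDAeq
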